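/- arXiv:2407.04150 — 9 statements merged into one kernel-verified Lean document; each statement's English description precedes it below -/
import Mathlib

section
/- If a connected graph G on n vertices is factored into graphs H and K, i.e., there exist symmetric 0-1 adjacency matrices A, B, C (with zero diagonal) of G, H, K on the same vertex set with A = BC, then the largest eigenvalue of A equals the product of the largest eigenvalues of B and C. -/
open SimpleGraph Matrix

namespace PerronAux

variable {n : ℕ}

noncomputable def E (x : Fin n → ℝ) : EuclideanSpace ℝ (Fin n) :=
  (WithLp.equiv 2 (Fin n → ℝ)).symm x

lemma inner_E (x y : Fin n → ℝ) : (inner ℝ (E x) (E y) : ℝ) = x ⬝ᵥ y := by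
  simp [E, PiLp.inner_apply, dotProduct, mul_comm]

variable {M : Matrix (Fin n) (Fin n) ℝ}

lemma transpose_eq (hM : M.IsHermitian) : Mᵀ = M := by
  ext i j; rw [transpose_apply]; conv_rhs => rw [← hM]; simp [conjTranspose_apply]

lemma dot_symm (hM : M.IsHermitian) (x y : Fin n → ℝ) :
    x ⬝ᵥ (M *ᵥ y) = (M *ᵥ x) ⬝ᵥ y := by
  rw [dotProduct_mulVec, ← mulVec_transpose, transpose_eq hM]

noncomputable def lam (hM : M.IsHermitian) : ℝ := ⨆ i, hM.eigenvalues i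

lemma eig_le_lam (hM : M.IsHermitian) (i : Fin n) : hM.eigenvalues i ≤ lam hM :=
  le_ciSup ((Set.finite_range _).bddAbove) i

noncomputable def co (hM : M.IsHermitian) (x : Fin n → ℝ) (j : Fin n) : ℝ :=
  ⇑(hM.eigenvectorBasis j) ⬝ᵥ x

lemma inner_basis (hM : M.IsHermitian) (x : Fin n → ℝ) (j : Fin n) :
    (inner ℝ (hM.eigenvectorBasis j) (E x) : ℝ) = co hM x j := by
  have h : (inner ℝ (E ⇑(hM.eigenvectorBasis j)) (E x) : ℝ) = co hM x j := by
    rw [inner_E]; rfl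
  exact h

lemma inner_basis' (hM : M.IsHermitian) (x : Fin n → ℝ) (j : Fin n) :
    (inner ℝ (E x) (hM.eigenvectorBasis j) : ℝ) = co hM x j := by
  rw [real_inner_comm]; exact inner_basis hM x j

lemma sum_sq (hM : M.IsHermitian) (x : Fin n → ℝ) : x ⬝ᵥ x = ∑ j, co hM x j ^ 2 := by
  have h := (hM.eigenvectorBasis).sum_inner_mul_inner (E x) (E x)
  rw [inner_E] at h
  rw [← h]
  refine Finset.sum_congr rfl fun j _ => ?_
  rw [inner_basis', inner_basis, sq]

lemma inner_basis_mulVec (hM : M.IsHermitian) (x : Fin n → ℝ) (j : Fin n) :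
    (inner ℝ (hM.eigenvectorBasis j) (E (M *ᵥ x)) : ℝ) = hM.eigenvalues j * co hM x j := by
  rw [inner_basis]
  show ⇑(hM.eigenvectorBasis j) ⬝ᵥ (M *ᵥ x) = _
  rw [dot_symm hM, hM.mulVec_eigenvectorBasis, smul_dotProduct]
  rfl

lemma sum_eig (hM : M.IsHermitian) (x : Fin n → ℝ) :
    x ⬝ᵥ (M *ᵥ x) = ∑ j, hM.eigenvalues j * co hM x j ^ 2 := by
  have h := (hM.eigenvectorBasis).sum_inner_mul_inner (E x) (E (M *ᵥ x))
  rw [inner_E] at h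
  rw [← h]
  refine Finset.sum_congr rfl fun j _ => ?_
  rw [inner_basis', inner_basis_mulVec hM x j]
  ring

lemma rayleigh_le (hM : M.IsHermitian) (x : Fin n → ℝ) :
    x ⬝ᵥ (M *ᵥ x) ≤ lam hM * (x ⬝ᵥ x) := by
  rw [sum_eig hM x, sum_sq hM x, Finset.mul_sum]
  exact Finset.sum_le_sum fun j _ => mul_le_mul_of_nonneg_right (eig_le_lam hM j) (sq_nonneg _)

lemma eq_basis_inner (hM : M.IsHermitian) {x y : EuclideanSpace ℝ (Fin n)}
    (h : ∀ j, (inner ℝ (hM.eigenvectorBasis j) x : ℝ) = inner ℝ (hM.eigenvectorBasis j) y) :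
    x = y := by
  rw [← (hM.eigenvectorBasis).sum_repr' x, ← (hM.eigenvectorBasis).sum_repr' y]
  exact Finset.sum_congr rfl fun j _ => by rw [h j]

lemma eigenvector_of_eq (hM : M.IsHermitian) {x : Fin n → ℝ}
    (h : x ⬝ᵥ (M *ᵥ x) = lam hM * (x ⬝ᵥ x)) : M *ᵥ x = lam hM • x := by
  have hsum : ∑ j, ((lam hM - hM.eigenvalues j) * co hM x j ^ 2) = 0 := by
    have h2 : ∑ j, (lam hM * co hM x j ^ 2 - hM.eigenvalues j * co hM x j ^ 2) = 0 := by
      rw [Finset.sum_sub_distrib, ← Finset.mul_sum, ← sum_sq, ← sum_eig, h, sub_self]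
    calc ∑ j, ((lam hM - hM.eigenvalues j) * co hM x j ^ 2)
        = ∑ j, (lam hM * co hM x j ^ 2 - hM.eigenvalues j * co hM x j ^ 2) := by
          refine Finset.sum_congr rfl fun j _ => by ring
      _ = 0 := h2
  have hz := (Finset.sum_eq_zero_iff_of_nonneg (fun j _ =>
    mul_nonneg (sub_nonneg.2 (eig_le_lam hM j)) (sq_nonneg _))).1 hsum
  have key : ∀ j, hM.eigenvalues j * co hM x j = lam hM * co hM x j := by
    intro j
    rcases mul_eq_zero.1 (hz j (Finset.mem_univ j)) with h1 | h2
    · have : hM.eigenvalues j = lam hM := by linarith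
      rw [this]
    · have : co hM x j = 0 := by
        have := sq_eq_zero_iff.1 h2
        exact this
      simp [this]
  have hE : E (M *ᵥ x) = lam hM • E x := by
    refine eq_basis_inner hM fun j => ?_
    rw [inner_basis_mulVec, real_inner_smul_right, inner_basis, key j]
  exact congrArg (fun y : EuclideanSpace ℝ (Fin n) => ⇑y) hE

lemma exists_top_eigenvector [Nonempty (Fin n)] (hM : M.IsHermitian) :
    ∃ v : Fin n → ℝ, v ≠ 0 ∧ M *ᵥ v = lam hM • v := by
  obtain ⟨j, hj⟩ := Finite.exists_max hM.eigenvalues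
  have hje : hM.eigenvalues j = lam hM := le_antisymm (eig_le_lam hM j) (ciSup_le hj)
  refine ⟨⇑(hM.eigenvectorBasis j), ?_, by rw [hM.mulVec_eigenvectorBasis, hje]⟩
  intro h0
  exact hM.eigenvectorBasis.orthonormal.ne_zero j
    (PiLp.ext fun i => congrFun h0 i)




variable {n : ℕ} {M : Matrix (Fin n) (Fin n) ℝ}

lemma dot_abs_le (h0 : ∀ i j, 0 ≤ M i j) (x : Fin n → ℝ) :
    x ⬝ᵥ (M *ᵥ x) ≤ (fun i => |x i|) ⬝ᵥ (M *ᵥ fun i => |x i|) := by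
  simp only [dotProduct, mulVec]
  refine Finset.sum_le_sum fun i _ => ?_
  rw [Finset.mul_sum, Finset.mul_sum]
  refine Finset.sum_le_sum fun j _ => ?_
  calc x i * (M i j * x j) = M i j * (x i * x j) := by ring
    _ ≤ M i j * |x i * x j| := mul_le_mul_of_nonneg_left (le_abs_self _) (h0 i j)
    _ = |x i| * (M i j * |x j|) := by rw [abs_mul]; ring

lemma abs_dot_self (x : Fin n → ℝ) :
    x ⬝ᵥ x = (fun i => |x i|) ⬝ᵥ (fun i => |x i|) := by
  simp only [dotProduct]
  exact Finset.sum_congr rfl fun i _ => (abs_mul_abs_self (x i)).symm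

-- step of propagation
lemma step_zero {G : SimpleGraph (Fin n)} [DecidableRel G.Adj] {w : Fin n → ℝ} {t : ℝ}
    (hw : G.adjMatrix ℝ *ᵥ w = t • w) (hnn : ∀ i, 0 ≤ w i) {i j : Fin n}
    (hij : G.Adj i j) (h0 : w i = 0) : w j = 0 := by
  have hs : (G.adjMatrix ℝ *ᵥ w) i = 0 := by rw [hw]; simp [h0]
  rw [adjMatrix_mulVec_apply] at hs
  exact (Finset.sum_eq_zero_iff_of_nonneg (fun k _ => hnn k)).1 hs j
    (by simpa [mem_neighborFinset] using hij)

lemma zero_along_walk {G : SimpleGraph (Fin n)} [DecidableRel G.Adj] {w : Fin n → ℝ} {t : ℝ}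
    (hw : G.adjMatrix ℝ *ᵥ w = t • w) (hnn : ∀ i, 0 ≤ w i) {i j : Fin n}
    (p : G.Walk i j) : w i = 0 → w j = 0 := by
  induction p with
  | nil => exact id
  | cons h p ih => exact fun h0 => ih (step_zero hw hnn h h0)

lemma pos_of_eigenvector {G : SimpleGraph (Fin n)} [DecidableRel G.Adj] (hG : G.Connected)
    {w : Fin n → ℝ} {t : ℝ} (hw : G.adjMatrix ℝ *ᵥ w = t • w) (hnn : ∀ i, 0 ≤ w i)
    (hne : w ≠ 0) (i : Fin n) : 0 < w i := by
  rcases (hnn i).lt_or_eq with h | h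
  · exact h
  · exfalso
    apply hne
    funext j
    obtain ⟨p⟩ := hG.preconnected i j
    exact zero_along_walk hw hnn p h.symm

lemma eq_smul_of_eigenvector {G : SimpleGraph (Fin n)} [DecidableRel G.Adj] (hG : G.Connected)
    {v u : Fin n → ℝ} {t : ℝ} (hv : G.adjMatrix ℝ *ᵥ v = t • v) (hvpos : ∀ i, 0 < v i)
    (hu : G.adjMatrix ℝ *ᵥ u = t • u) : ∃ c : ℝ, u = c • v := by
  haveI : Nonempty (Fin n) := hG.nonempty
  obtain ⟨i0, -, hmin⟩ := Finset.exists_min_image Finset.univ (fun i => u i / v i)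
    ⟨Classical.arbitrary _, Finset.mem_univ _⟩
  set c := u i0 / v i0 with hc
  refine ⟨c, ?_⟩
  set w := u - c • v with hwdef
  have hw : G.adjMatrix ℝ *ᵥ w = t • w := by
    rw [hwdef, mulVec_sub, mulVec_smul, hu, hv, smul_sub, smul_comm]
  have hnn : ∀ i, 0 ≤ w i := by
    intro i
    have h1 : c ≤ u i / v i := hmin i (Finset.mem_univ i)
    have h2 : c * v i ≤ u i := (le_div_iff₀ (hvpos i)).1 h1
    simp only [hwdef, Pi.sub_apply, Pi.smul_apply, smul_eq_mul]
    linarith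
  have hi0 : w i0 = 0 := by
    simp only [hwdef, Pi.sub_apply, Pi.smul_apply, smul_eq_mul, hc]
    rw [div_mul_cancel₀ _ (ne_of_gt (hvpos i0))]
    ring
  by_cases hne : w = 0
  · exact sub_eq_zero.1 (hwdef ▸ hne)
  · exact absurd hi0 (ne_of_gt (pos_of_eigenvector hG hw hnn hne i0))



lemma abs_eigenvector (hM : M.IsHermitian) (h0 : ∀ i j, 0 ≤ M i j) {x : Fin n → ℝ}
    (hx0 : x ≠ 0) (hx : M *ᵥ x = lam hM • x) :
    M *ᵥ (fun i => |x i|) = lam hM • fun i => |x i| := by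
  apply eigenvector_of_eq hM
  have h1 := rayleigh_le hM (fun i => |x i|)
  have h2 : x ⬝ᵥ (M *ᵥ x) = lam hM * (x ⬝ᵥ x) := by
    rw [hx, dotProduct_smul, smul_eq_mul]
  have h3 := abs_dot_self x
  have h4 := dot_abs_le h0 x
  rw [h3] at h2
  linarith

lemma lam_eq_of_pos_eigen (hM : M.IsHermitian) (h0 : ∀ i j, 0 ≤ M i j)
    [Nonempty (Fin n)] {v : Fin n → ℝ} (hvpos : ∀ i, 0 < v i) {β : ℝ}
    (hv : M *ᵥ v = β • v) : lam hM = β := by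
  apply le_antisymm
  · refine ciSup_le fun j => ?_
    set u : Fin n → ℝ := ⇑(hM.eigenvectorBasis j) with hudef
    have hu : M *ᵥ u = hM.eigenvalues j • u := hM.mulVec_eigenvectorBasis j
    have hune : ∃ i, u i ≠ 0 := by
      by_contra hh
      push_neg at hh
      exact hM.eigenvectorBasis.orthonormal.ne_zero j (PiLp.ext fun i => hh i)
    have hpt : ∀ i, |hM.eigenvalues j| * |u i| ≤ (M *ᵥ fun k => |u k|) i := by
      intro i
      have habs : |(M *ᵥ u) i| ≤ (M *ᵥ fun k => |u k|) i := by
        simp only [mulVec, dotProduct]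
        refine (Finset.abs_sum_le_sum_abs _ _).trans ?_
        refine Finset.sum_le_sum fun k _ => ?_
        rw [abs_mul, abs_of_nonneg (h0 i k)]
      rw [hu] at habs
      simpa [abs_mul] using habs
    have hd : |hM.eigenvalues j| * ((fun k => |u k|) ⬝ᵥ v) ≤ β * ((fun k => |u k|) ⬝ᵥ v) := by
      calc |hM.eigenvalues j| * ((fun k => |u k|) ⬝ᵥ v)
          = ∑ i, (|hM.eigenvalues j| * |u i|) * v i := by
            simp only [dotProduct, Finset.mul_sum]
            exact Finset.sum_congr rfl fun i _ => by ring
        _ ≤ ∑ i, (M *ᵥ fun k => |u k|) i * v i :=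
            Finset.sum_le_sum fun i _ => mul_le_mul_of_nonneg_right (hpt i) (hvpos i).le
        _ = (M *ᵥ fun k => |u k|) ⬝ᵥ v := rfl
        _ = (fun k => |u k|) ⬝ᵥ (M *ᵥ v) := (dot_symm hM _ _).symm
        _ = β * ((fun k => |u k|) ⬝ᵥ v) := by rw [hv, dotProduct_smul, smul_eq_mul]
    have hpos : 0 < (fun k => |u k|) ⬝ᵥ v := by
      obtain ⟨i, hi⟩ := hune
      exact Finset.sum_pos' (fun k _ => mul_nonneg (abs_nonneg _) (hvpos k).le)
        ⟨i, Finset.mem_univ i, mul_pos (abs_pos.2 hi) (hvpos i)⟩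
    exact (le_abs_self _).trans (le_of_mul_le_mul_right hd hpos)
  · have h1 : v ⬝ᵥ (M *ᵥ v) = β * (v ⬝ᵥ v) := by rw [hv, dotProduct_smul, smul_eq_mul]
    have h2 := rayleigh_le hM v
    have hvv : 0 < v ⬝ᵥ v :=
      Finset.sum_pos (fun i _ => mul_pos (hvpos i) (hvpos i)) Finset.univ_nonempty
    nlinarith

end PerronAux

open PerronAux in
theorem stmt0 {n : ℕ} (G H K : SimpleGraph (Fin n))
    [DecidableRel G.Adj] [DecidableRel H.Adj] [DecidableRel K.Adj]
    (hG : G.Connected)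
    (hfac : G.adjMatrix ℝ = H.adjMatrix ℝ * K.adjMatrix ℝ)
    (hA : (G.adjMatrix ℝ).IsHermitian) (hB : (H.adjMatrix ℝ).IsHermitian)
    (hC : (K.adjMatrix ℝ).IsHermitian) :
    (⨆ i, hA.eigenvalues i) = (⨆ i, hB.eigenvalues i) * (⨆ i, hC.eigenvalues i) := by
  classical
  haveI : Nonempty (Fin n) := hG.nonempty
  have h0A : ∀ i j, 0 ≤ G.adjMatrix ℝ i j := fun i j => by
    by_cases h : G.Adj i j <;> simp [adjMatrix_apply, h]
  have h0B : ∀ i j, 0 ≤ H.adjMatrix ℝ i j := fun i j => by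
    by_cases h : H.Adj i j <;> simp [adjMatrix_apply, h]
  have h0C : ∀ i j, 0 ≤ K.adjMatrix ℝ i j := fun i j => by
    by_cases h : K.Adj i j <;> simp [adjMatrix_apply, h]
  obtain ⟨u, hu0, huA⟩ := exists_top_eigenvector hA
  set v : Fin n → ℝ := fun i => |u i| with hvdef
  have hvA : G.adjMatrix ℝ *ᵥ v = lam hA • v := abs_eigenvector hA h0A hu0 huA
  have hv0 : v ≠ 0 := fun h => hu0 (funext fun i => abs_eq_zero.1 (congrFun h i))
  have hvpos : ∀ i, 0 < v i := pos_of_eigenvector hG hvA (fun i => abs_nonneg _) hv0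
  -- commutation
  have hCB : K.adjMatrix ℝ * H.adjMatrix ℝ = H.adjMatrix ℝ * K.adjMatrix ℝ := by
    calc K.adjMatrix ℝ * H.adjMatrix ℝ = (K.adjMatrix ℝ)ᵀ * (H.adjMatrix ℝ)ᵀ := by
          rw [transpose_eq hB, transpose_eq hC]
      _ = (H.adjMatrix ℝ * K.adjMatrix ℝ)ᵀ := (transpose_mul _ _).symm
      _ = (G.adjMatrix ℝ)ᵀ := by rw [hfac]
      _ = H.adjMatrix ℝ * K.adjMatrix ℝ := by rw [transpose_eq hA, hfac]
  have hAB : G.adjMatrix ℝ * H.adjMatrix ℝ = H.adjMatrix ℝ * G.adjMatrix ℝ := by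
    rw [hfac, mul_assoc, hCB]
  have hAC : G.adjMatrix ℝ * K.adjMatrix ℝ = K.adjMatrix ℝ * G.adjMatrix ℝ := by
    rw [hfac, ← mul_assoc, hCB]
  -- B *ᵥ v and C *ᵥ v are lam-eigenvectors of A
  have hBv : G.adjMatrix ℝ *ᵥ (H.adjMatrix ℝ *ᵥ v) = lam hA • (H.adjMatrix ℝ *ᵥ v) := by
    rw [mulVec_mulVec, hAB, ← mulVec_mulVec, hvA, mulVec_smul]
  have hCv : G.adjMatrix ℝ *ᵥ (K.adjMatrix ℝ *ᵥ v) = lam hA • (K.adjMatrix ℝ *ᵥ v) := by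
    rw [mulVec_mulVec, hAC, ← mulVec_mulVec, hvA, mulVec_smul]
  obtain ⟨β, hβ⟩ := eq_smul_of_eigenvector hG hvA hvpos hBv
  obtain ⟨γ, hγ⟩ := eq_smul_of_eigenvector hG hvA hvpos hCv
  have hlam : lam hA = β * γ := by
    have h1 : G.adjMatrix ℝ *ᵥ v = (β * γ) • v := by
      rw [hfac, ← mulVec_mulVec, hγ, mulVec_smul, hβ, smul_smul, mul_comm]
    have h2 := hvA.symm.trans h1
    have h3 := congrFun h2 (Classical.arbitrary (Fin n))
    simp only [Pi.smul_apply, smul_eq_mul] at h3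
    exact mul_right_cancel₀ (ne_of_gt (hvpos _)) h3
  have hβeq : lam hB = β := lam_eq_of_pos_eigen hB h0B hvpos hβ
  have hγeq : lam hC = γ := lam_eq_of_pos_eigen hC h0C hvpos hγ
  show lam hA = lam hB * lam hC
  rw [hβeq, hγeq, hlam]
end

section
/- If A = BC where A, B, C are symmetric 0-1 matrices with zero diagonal (adjacency matrices of graphs G, H, K on the same vertex set), then for every vertex v, deg_G(v) = deg_H(v) · deg_K(v), i.e., the row sum of A at v equals the product of the row sums of B and C at v. -/
/-!
Entrywise, `A = BC` says that `(BC) v w = #(N_H(v) ∩ N_K(w))` is `1` when `v ~_G w` and `0`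
otherwise. If `v ~_G w`, pick `u ∈ N_H(v) ∩ N_K(w)` and, using `w ~_G v`, pick
`m ∈ N_H(w) ∩ N_K(v)`; then `w` is the unique element of `N_H(m) ∩ N_K(u)`, so `w ↦ (u, m)`
injects `N_G(v)` into `N_H(v) × N_K(v)` and `deg_G v ≤ deg_H v · deg_K v`. Summing over `v`,
the symmetry of `B` gives `1ᵀ (BC) 1 = (B 1) ⬝ (C 1)`, i.e. equality of the totals, so each of
these inequalities is an equality.
-/

open SimpleGraph Matrix

namespace SimpleGraph

open Finset

variable {V R : Type*} [Fintype V] {G H K : SimpleGraph V}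
  [DecidableRel G.Adj] [DecidableRel H.Adj] [DecidableRel K.Adj]

theorem sum_degree_eq_sum_degree_mul_degree [Semiring R] [CharZero R]
    (hfac : G.adjMatrix R = H.adjMatrix R * K.adjMatrix R) :
    ∑ v, G.degree v = ∑ v, H.degree v * K.degree v := by
  have h : (1 : V → R) ⬝ᵥ (G.adjMatrix R *ᵥ 1) =
      (1 ᵥ* H.adjMatrix R) ⬝ᵥ (K.adjMatrix R *ᵥ 1) := by
    rw [hfac, ← mulVec_mulVec, dotProduct_mulVec]
  simp only [dotProduct, adjMatrix_mulVec_apply, adjMatrix_vecMul_apply, Pi.one_apply,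
    sum_const, card_neighborFinset_eq_degree, nsmul_eq_mul, mul_one, one_mul] at h
  exact_mod_cast h

variable [DecidableEq V]

theorem adjMatrix_mul_adjMatrix_apply [NonAssocSemiring R] (v w : V) :
    (H.adjMatrix R * K.adjMatrix R) v w = #(H.neighborFinset v ∩ K.neighborFinset w) := by
  simp only [adjMatrix_mul_apply, adjMatrix_apply, sum_boole, ← filter_mem_eq_inter,
    mem_neighborFinset, adj_comm]

section Factorization

variable [NonAssocSemiring R] [CharZero R]

theorem card_neighborFinset_inter_eq_ite
    (hfac : G.adjMatrix R = H.adjMatrix R * K.adjMatrix R) (v w : V) :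
    #(H.neighborFinset v ∩ K.neighborFinset w) = if G.Adj v w then 1 else 0 := by
  have h := congrFun (congrFun hfac v) w
  rw [adjMatrix_mul_adjMatrix_apply, adjMatrix_apply] at h
  split_ifs at h ⊢ <;> exact_mod_cast h.symm

theorem card_neighborFinset_inter_le_one
    (hfac : G.adjMatrix R = H.adjMatrix R * K.adjMatrix R) (v w : V) :
    #(H.neighborFinset v ∩ K.neighborFinset w) ≤ 1 := by
  rw [card_neighborFinset_inter_eq_ite hfac]
  split_ifs <;> omega

theorem exists_mem_neighborFinset_inter_of_adj
    (hfac : G.adjMatrix R = H.adjMatrix R * K.adjMatrix R) {v w : V} (h : G.Adj v w) :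
    ∃ u, u ∈ H.neighborFinset v ∩ K.neighborFinset w := by
  have hcard := card_neighborFinset_inter_eq_ite hfac v w
  rw [if_pos h] at hcard
  exact card_pos.1 (hcard ▸ one_pos)

theorem neighborFinset_subset_biUnion
    (hfac : G.adjMatrix R = H.adjMatrix R * K.adjMatrix R) (v : V) :
    G.neighborFinset v ⊆ (H.neighborFinset v ×ˢ K.neighborFinset v).biUnion
      fun p => H.neighborFinset p.2 ∩ K.neighborFinset p.1 := by
  intro w hw
  rw [mem_neighborFinset] at hw
  obtain ⟨u, hu⟩ := exists_mem_neighborFinset_inter_of_adj hfac hw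
  obtain ⟨m, hm⟩ := exists_mem_neighborFinset_inter_of_adj hfac hw.symm
  simp only [mem_inter, mem_neighborFinset] at hu hm
  simp only [mem_biUnion, mem_product, mem_inter, mem_neighborFinset]
  exact ⟨(u, m), ⟨hu.1, hm.2⟩, hm.1.symm, hu.2.symm⟩

theorem degree_le_degree_mul_degree
    (hfac : G.adjMatrix R = H.adjMatrix R * K.adjMatrix R) (v : V) :
    G.degree v ≤ H.degree v * K.degree v :=
  calc G.degree v = #(G.neighborFinset v) := (card_neighborFinset_eq_degree G v).symm
    _ ≤ #((H.neighborFinset v ×ˢ K.neighborFinset v).biUnion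
          fun p => H.neighborFinset p.2 ∩ K.neighborFinset p.1) :=
      card_le_card (neighborFinset_subset_biUnion hfac v)
    _ ≤ ∑ p ∈ H.neighborFinset v ×ˢ K.neighborFinset v,
          #(H.neighborFinset p.2 ∩ K.neighborFinset p.1) := card_biUnion_le
    _ ≤ #(H.neighborFinset v ×ˢ K.neighborFinset v) • 1 :=
      sum_le_card_nsmul _ _ _ fun p _ => card_neighborFinset_inter_le_one hfac p.2 p.1
    _ = H.degree v * K.degree v := by simp [card_product]

end Factorization

end SimpleGraph

theorem stmt1 {n : ℕ} (G H K : SimpleGraph (Fin n))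
    [DecidableRel G.Adj] [DecidableRel H.Adj] [DecidableRel K.Adj]
    (hfac : G.adjMatrix ℝ = H.adjMatrix ℝ * K.adjMatrix ℝ) (v : Fin n) :
    G.degree v = H.degree v * K.degree v :=
  (Finset.sum_eq_sum_iff_of_le fun w _ => degree_le_degree_mul_degree hfac w).1
    (sum_degree_eq_sum_degree_mul_degree hfac) v (Finset.mem_univ v)
end

section
/- If a graph G is factored into graphs H and K (A = BC for adjacency matrices) and vertices u and v lie in the same connected component of H, then deg_K(u) = deg_K(v). -/
/-!
Transposing `A = BC` shows that `B` and `C` commute, and then `AC = BC²` is symmetric too.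
Since `A` is a 0-1 matrix, an `H`-edge `xy` followed by a `K`-edge `yz` forces a `G`-edge `xz`;
so for an `H`-edge `xy` every `K`-neighbour of `y` is a `G`-neighbour of `x`, i.e.
`(AC) x y = deg_K y`. Symmetry of `AC` then gives `deg_K x = deg_K y` along every `H`-edge.
-/

open SimpleGraph Matrix

theorem Matrix.IsSymm.commute_iff {n α : Type*} [Fintype n] [CommSemiring α]
    {B C : Matrix n n α} (hB : B.IsSymm) (hC : C.IsSymm) :
    Commute B C ↔ (B * C).IsSymm := by
  rw [commute_iff_eq, IsSymm, transpose_mul, hB.eq, hC.eq, eq_comm]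

namespace SimpleGraph

variable {V α : Type*} [Fintype V] [CommSemiring α]
  {G H K : SimpleGraph V} [DecidableRel G.Adj] [DecidableRel H.Adj] [DecidableRel K.Adj]

lemma isSymm_mul_adjMatrix_of_adjMatrix_eq_mul
    (hfac : G.adjMatrix α = H.adjMatrix α * K.adjMatrix α) :
    (G.adjMatrix α * K.adjMatrix α).IsSymm := by
  have hHK : Commute (H.adjMatrix α) (K.adjMatrix α) :=
    (isSymm_adjMatrix H).commute_iff (isSymm_adjMatrix K) |>.mpr (hfac ▸ isSymm_adjMatrix G)
  refine (isSymm_adjMatrix G).commute_iff (isSymm_adjMatrix K) |>.mp ?_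
  rw [hfac]
  exact hHK.mul_left (Commute.refl _)

variable [PartialOrder α] [IsStrictOrderedRing α]

omit [Fintype V] in
lemma adjMatrix_apply_nonneg (x y : V) : 0 ≤ G.adjMatrix α x y := by
  rw [adjMatrix_apply]
  split_ifs <;> simp

lemma adj_of_adjMatrix_eq_mul (hfac : G.adjMatrix α = H.adjMatrix α * K.adjMatrix α)
    {x y z : V} (hxy : H.Adj x y) (hyz : K.Adj y z) : G.Adj x z := by
  have hpos : (0 : α) < G.adjMatrix α x z :=
    calc (0 : α) < K.adjMatrix α y z := by simp [hyz]
      _ ≤ ∑ k ∈ H.neighborFinset x, K.adjMatrix α k z :=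
        Finset.single_le_sum (fun k _ => adjMatrix_apply_nonneg k z) (by simpa using hxy)
      _ = G.adjMatrix α x z := by rw [hfac, adjMatrix_mul_apply]
  by_contra hxz
  simp [hxz] at hpos

lemma mul_adjMatrix_apply_of_adj (hfac : G.adjMatrix α = H.adjMatrix α * K.adjMatrix α)
    {x y : V} (hxy : H.Adj x y) :
    (G.adjMatrix α * K.adjMatrix α) x y = K.degree y := by
  rw [mul_adjMatrix_apply, ← card_neighborFinset_eq_degree, Finset.cast_card]
  refine Finset.sum_congr rfl fun z hz => ?_
  simp [adj_of_adjMatrix_eq_mul hfac hxy ((mem_neighborFinset K y z).mp hz)]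

lemma degree_eq_of_adj_of_adjMatrix_eq_mul
    (hfac : G.adjMatrix α = H.adjMatrix α * K.adjMatrix α) {x y : V} (hxy : H.Adj x y) :
    K.degree x = K.degree y := by
  have h := (isSymm_mul_adjMatrix_of_adjMatrix_eq_mul hfac).apply x y
  rw [mul_adjMatrix_apply_of_adj hfac hxy, mul_adjMatrix_apply_of_adj hfac hxy.symm] at h
  exact_mod_cast h

end SimpleGraph

theorem stmt2 {n : ℕ} (G H K : SimpleGraph (Fin n))
    [DecidableRel G.Adj] [DecidableRel H.Adj] [DecidableRel K.Adj]
    (hfac : G.adjMatrix ℝ = H.adjMatrix ℝ * K.adjMatrix ℝ)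
    (u v : Fin n) (huv : H.Reachable u v) :
    K.degree u = K.degree v := by
  obtain ⟨w⟩ := huv
  induction w with
  | nil => rfl
  | cons h _ ih => exact (degree_eq_of_adj_of_adjMatrix_eq_mul hfac h).trans ih
end

section
/- If a connected regular graph G is factored into graphs H and K, then both H and K are regular. -/
/-!
Transposing `A_G = A_H A_K` gives `A_G = A_K A_H`, so `A_H` and `A_K` commute, hence both commute
with `A_G`. If `A_H` commutes with the adjacency matrix of an `r`-regular graph `G`, then the degree
vector `A_H 𝟙` of `H` satisfies `A_G (A_H 𝟙) = A_H (A_G 𝟙) = r • A_H 𝟙`, i.e. it lies in the kernel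
of the Laplacian `r • 1 - A_G` of `G`. When `G` is connected that kernel consists of the constant
vectors, so `H` is regular.
-/

open SimpleGraph Matrix

namespace SimpleGraph

variable {V : Type*} [Fintype V]

theorem commute_adjMatrix_of_adjMatrix_eq_mul {R : Type*} [CommSemiring R] {G H K : SimpleGraph V}
    [DecidableRel G.Adj] [DecidableRel H.Adj] [DecidableRel K.Adj]
    (h : G.adjMatrix R = H.adjMatrix R * K.adjMatrix R) :
    Commute (H.adjMatrix R) (K.adjMatrix R) := by
  have h' := congrArg transpose h
  rw [transpose_adjMatrix, transpose_mul, transpose_adjMatrix, transpose_adjMatrix] at h'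
  exact h.symm.trans h'

theorem IsRegularOfDegree.lapMatrix_mulVec [DecidableEq V] {G : SimpleGraph V} [DecidableRel G.Adj]
    {r : ℕ} (hr : G.IsRegularOfDegree r) (x : V → ℝ) :
    G.lapMatrix ℝ *ᵥ x = (r : ℝ) • x - G.adjMatrix ℝ *ᵥ x := by
  ext v
  rw [lapMatrix_mulVec_apply, hr v, Pi.sub_apply, Pi.smul_apply, smul_eq_mul,
    adjMatrix_mulVec_apply]

theorem Connected.eq_of_adjMatrix_mulVec_eq_smul {G : SimpleGraph V} [DecidableRel G.Adj]
    (hG : G.Connected) {r : ℕ} (hr : G.IsRegularOfDegree r) {x : V → ℝ}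
    (hx : G.adjMatrix ℝ *ᵥ x = (r : ℝ) • x) (i j : V) : x i = x j := by
  classical
  have hker : G.lapMatrix ℝ *ᵥ x = 0 := by rw [hr.lapMatrix_mulVec, hx, sub_self]
  exact (lapMatrix_mulVec_eq_zero_iff_forall_reachable G).mp hker i j (hG i j)

theorem Connected.exists_isRegularOfDegree_of_commute {G H : SimpleGraph V}
    [DecidableRel G.Adj] [DecidableRel H.Adj] (hG : G.Connected) {r : ℕ}
    (hr : G.IsRegularOfDegree r) (hcomm : Commute (G.adjMatrix ℝ) (H.adjMatrix ℝ)) :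
    ∃ s, H.IsRegularOfDegree s := by
  set one : V → ℝ := Function.const V 1
  have hdeg : ∀ v, (H.adjMatrix ℝ *ᵥ one) v = H.degree v := fun v => by
    rw [adjMatrix_mulVec_const_apply, mul_one]
  have heigen : G.adjMatrix ℝ *ᵥ (H.adjMatrix ℝ *ᵥ one) = (r : ℝ) • (H.adjMatrix ℝ *ᵥ one) := by
    have hGone : G.adjMatrix ℝ *ᵥ one = (r : ℝ) • one := by
      ext v
      rw [adjMatrix_mulVec_const_apply_of_regular hr]
      simp [one]
    rw [mulVec_mulVec, hcomm.eq, ← mulVec_mulVec, hGone, mulVec_smul]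
  obtain ⟨v₀⟩ := hG.nonempty
  refine ⟨H.degree v₀, fun v => ?_⟩
  have := hG.eq_of_adjMatrix_mulVec_eq_smul hr heigen v v₀
  rw [hdeg, hdeg] at this
  exact_mod_cast this

end SimpleGraph

theorem stmt7 {n : ℕ} (G H K : SimpleGraph (Fin n))
    [DecidableRel G.Adj] [DecidableRel H.Adj] [DecidableRel K.Adj]
    (hG : G.Connected) (hreg : ∃ r, G.IsRegularOfDegree r)
    (hfac : G.adjMatrix ℝ = H.adjMatrix ℝ * K.adjMatrix ℝ) :
    (∃ r, H.IsRegularOfDegree r) ∧ (∃ s, K.IsRegularOfDegree s) := by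
  obtain ⟨r, hr⟩ := hreg
  have hHK := commute_adjMatrix_of_adjMatrix_eq_mul hfac
  constructor
  · refine hG.exists_isRegularOfDegree_of_commute hr ?_
    rw [hfac]
    exact (Commute.refl _).mul_left hHK.symm
  · refine hG.exists_isRegularOfDegree_of_commute hr ?_
    rw [hfac]
    exact hHK.mul_left (Commute.refl _)
end

section
/- Let G be a graph factored into a connected non-bipartite graph H and a graph K with no isolated vertex (A = BC for adjacency matrices). Then G is connected. -/
/-!
The entry `(BC)ᵢⱼ` counts the vertices `z` with `i ~_H z ~_K j`, so `A = BC` makes `i` and `j`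
adjacent in `G` as soon as one such `z` exists. For an `H`-path `x ~ y ~ z`, pick a `K`-neighbour
`w` of `y`: then `x ~_G w` and `z ~_G w`, so two `H`-steps can be simulated in `G`. Hence `G` joins
any two vertices that are joined by an even `H`-walk, and in a connected non-bipartite graph every
two vertices are (detour through an odd closed walk if necessary).
-/

open SimpleGraph

namespace SimpleGraph

variable {V : Type*}

theorem adj_of_adjMatrix_eq_mul_s13 {R : Type*} [Semiring R] [PartialOrder R] [IsOrderedRing R]
    [Nontrivial R] [Fintype V] {G H K : SimpleGraph V}
    [DecidableRel G.Adj] [DecidableRel H.Adj] [DecidableRel K.Adj]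
    (hfac : G.adjMatrix R = H.adjMatrix R * K.adjMatrix R)
    {i z j : V} (hiz : H.Adj i z) (hzj : K.Adj z j) : G.Adj i j := by
  have hpos : 0 < (H.adjMatrix R * K.adjMatrix R) i j := by
    rw [adjMatrix_mul_apply]
    calc (0 : R) < K.adjMatrix R z j := by simp [hzj]
      _ ≤ ∑ u ∈ H.neighborFinset i, K.adjMatrix R u j :=
        Finset.single_le_sum (f := fun u => K.adjMatrix R u j)
          (fun u _ => by by_cases h : K.Adj u j <;> simp [adjMatrix_apply, h])
          ((H.mem_neighborFinset i z).mpr hiz)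
  rw [← hfac] at hpos
  by_contra h
  simp [h] at hpos

theorem reachable_of_adj_of_adj {G H K : SimpleGraph V}
    (hHK : ∀ {i z j}, H.Adj i z → K.Adj z j → G.Adj i j) (hK : ∀ v, ∃ w, K.Adj v w)
    {x y z : V} (hxy : H.Adj x y) (hyz : H.Adj y z) : G.Reachable x z := by
  obtain ⟨w, hyw⟩ := hK y
  exact (hHK hxy hyw).reachable.trans (hHK hyz.symm hyw).reachable.symm

theorem reachable_of_even_length {G H : SimpleGraph V}
    (h2 : ∀ {x y z}, H.Adj x y → H.Adj y z → G.Reachable x z) :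
    ∀ {x z : V} (p : H.Walk x z), Even p.length → G.Reachable x z
  | _, _, .nil, _ => .refl _
  | _, _, .cons _ .nil, h => absurd h (by simp)
  | _, _, .cons hxy (.cons hyz p), h =>
    (h2 hxy hyz).trans (reachable_of_even_length h2 p (by simpa [parity_simps] using h))

theorem Connected.exists_walk_even_length {H : SimpleGraph V} (hconn : H.Connected)
    (hnonbip : ¬ H.Colorable 2) (x y : V) : ∃ p : H.Walk x y, Even p.length := by
  obtain ⟨u, c, hc⟩ : ∃ u, ∃ c : H.Walk u u, ¬ Even c.length := by
    simpa [two_colorable_iff_forall_loop_even] using hnonbip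
  obtain ⟨p⟩ := hconn.preconnected x y
  by_cases hp : Even p.length
  · exact ⟨p, hp⟩
  obtain ⟨q⟩ := hconn.preconnected x u
  refine ⟨(q.append (c.append q.reverse)).append p, ?_⟩
  simp only [Walk.length_append, Walk.length_reverse]
  simp only [Nat.not_even_iff_odd] at hc hp
  grind

end SimpleGraph

theorem stmt13 {n : ℕ} (G H K : SimpleGraph (Fin n))
    [DecidableRel G.Adj] [DecidableRel H.Adj] [DecidableRel K.Adj]
    (hfac : G.adjMatrix ℝ = H.adjMatrix ℝ * K.adjMatrix ℝ)
    (hHconn : H.Connected) (hHnonbip : ¬ H.Colorable 2)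
    (hK : ∀ v, 0 < K.degree v) :
    G.Connected := by
  have hKadj : ∀ v, ∃ w, K.Adj v w := fun v => (K.degree_pos_iff_exists_adj v).mp (hK v)
  have h2 : ∀ {x y z}, H.Adj x y → H.Adj y z → G.Reachable x z :=
    reachable_of_adj_of_adj (adj_of_adjMatrix_eq_mul_s13 hfac) hKadj
  have := hHconn.nonempty
  refine ⟨fun x y => ?_⟩
  obtain ⟨p, hp⟩ := hHconn.exists_walk_even_length hHnonbip x y
  exact reachable_of_even_length h2 p hp
end

section
/- Let a disconnected graph G be factored into a connected graph H and a graph K with no isolated vertex. Then both H and K are bipartite. -/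
open SimpleGraph Matrix

/-!
Since adjacency matrices are nonnegative, `A_G = A_H A_K` says that an `H`-edge followed by a
`K`-edge is a `G`-edge. As `K` has no isolated vertex, every `H`-walk of length two therefore
joins two vertices of the same component of `G`, and so does every even `H`-walk. In the
connected graph `H`, every vertex is joined to one of the two ends of a fixed `H`-edge by an
even walk, so `G` has at most two components; as `G` is disconnected, `H`-edges always cross
between them. Colouring the vertices by their `G`-component thus properly colours `H`, and also
`K`: a `K`-edge `u w` and an `H`-edge `x u` give the `G`-edge `x w`.
-/

namespace SimpleGraph

variable {V : Type*} [Fintype V] {G H K : SimpleGraph V}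
  [DecidableRel G.Adj] [DecidableRel H.Adj] [DecidableRel K.Adj]

theorem adj_of_adjMatrix_eq_mul_s14 (hfac : G.adjMatrix ℝ = H.adjMatrix ℝ * K.adjMatrix ℝ)
    {u w v : V} (huw : H.Adj u w) (hwv : K.Adj w v) : G.Adj u v := by
  have hpos : 0 < (H.adjMatrix ℝ * K.adjMatrix ℝ) u v := by
    rw [mul_apply]
    refine Finset.sum_pos' (fun x _ => mul_nonneg ?_ ?_) ⟨w, Finset.mem_univ w, ?_⟩ <;>
      simp only [adjMatrix_apply] <;> split_ifs <;> simp_all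
  by_contra h
  rw [← hfac, adjMatrix_apply, if_neg h] at hpos
  exact hpos.false

theorem reachable_of_even_walk (hfac : G.adjMatrix ℝ = H.adjMatrix ℝ * K.adjMatrix ℝ)
    (hK : ∀ v, ∃ w, K.Adj v w) : ∀ {u v : V} (p : H.Walk u v), Even p.length → G.Reachable u v
  | _, _, .nil, _ => .rfl
  | _, _, .cons _ .nil, hp => by simp at hp
  | _, _, .cons huw (.cons hwv p), hp => by
    obtain ⟨x, hwx⟩ := hK _
    have hp' : Even p.length := by simpa [Nat.even_add_one] using hp
    exact (adj_of_adjMatrix_eq_mul_s14 hfac huw hwx).reachable.trans <|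
      (adj_of_adjMatrix_eq_mul_s14 hfac hwv.symm hwx).reachable.symm.trans <|
      reachable_of_even_walk hfac hK p hp'

theorem reachable_or_reachable_of_adj (hfac : G.adjMatrix ℝ = H.adjMatrix ℝ * K.adjMatrix ℝ)
    (hK : ∀ v, ∃ w, K.Adj v w) (hH : H.Preconnected) {u w : V} (huw : H.Adj u w) (v : V) :
    G.Reachable u v ∨ G.Reachable w v := by
  obtain ⟨p⟩ := hH u v
  rcases Nat.even_or_odd p.length with hp | hp
  · exact .inl (reachable_of_even_walk hfac hK p hp)
  · refine .inr (reachable_of_even_walk hfac hK (.cons huw.symm p) ?_)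
    simpa [Nat.even_add_one] using hp

theorem not_reachable_of_adj (hfac : G.adjMatrix ℝ = H.adjMatrix ℝ * K.adjMatrix ℝ)
    (hK : ∀ v, ∃ w, K.Adj v w) (hH : H.Preconnected) (hG : ¬G.Connected) {u w : V}
    (huw : H.Adj u w) : ¬G.Reachable u w := fun hreach => by
  have : Nonempty V := ⟨u⟩
  have hu : ∀ v, G.Reachable u v := fun v =>
    (reachable_or_reachable_of_adj hfac hK hH huw v).elim id hreach.trans
  exact hG ⟨fun v v' => (hu v).symm.trans (hu v')⟩

theorem reachable_ne_of_adj_left (hfac : G.adjMatrix ℝ = H.adjMatrix ℝ * K.adjMatrix ℝ)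
    (hK : ∀ v, ∃ w, K.Adj v w) (hH : H.Preconnected) (hG : ¬G.Connected) (a : V) {u w : V}
    (huw : H.Adj u w) : G.Reachable a u ≠ G.Reachable a w := by
  intro h
  have hnot := not_reachable_of_adj hfac hK hH hG huw
  rcases reachable_or_reachable_of_adj hfac hK hH huw a with hua | hwa
  · exact hnot (hua.trans (h.mp hua.symm))
  · exact hnot ((h.mpr hwa.symm).symm.trans hwa.symm)

theorem reachable_ne_of_adj_right (hfac : G.adjMatrix ℝ = H.adjMatrix ℝ * K.adjMatrix ℝ)
    (hK : ∀ v, ∃ w, K.Adj v w) (hH : H.Preconnected) (hG : ¬G.Connected) (a : V) {u w : V}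
    (huw : K.Adj u w) : G.Reachable a u ≠ G.Reachable a w := by
  have : Nontrivial V := ⟨u, w, huw.ne⟩
  obtain ⟨x, hux⟩ := hH.exists_adj_of_nontrivial u
  have hxw := (adj_of_adjMatrix_eq_mul_s14 hfac hux.symm huw).reachable
  have hax : G.Reachable a x = G.Reachable a w := propext ⟨(·.trans hxw), (·.trans hxw.symm)⟩
  rw [← hax]
  exact reachable_ne_of_adj_left hfac hK hH hG a hux

end SimpleGraph

theorem stmt14 {n : ℕ} (G H K : SimpleGraph (Fin n))
    [DecidableRel G.Adj] [DecidableRel H.Adj] [DecidableRel K.Adj]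
    (hfac : G.adjMatrix ℝ = H.adjMatrix ℝ * K.adjMatrix ℝ)
    (hGdisc : ¬ G.Connected) (hHconn : H.Connected)
    (hK : ∀ v, 0 < K.degree v) :
    H.Colorable 2 ∧ K.Colorable 2 := by
  have hK' : ∀ v, ∃ w, K.Adj v w := fun v => (K.degree_pos_iff_exists_adj v).mp (hK v)
  obtain ⟨a⟩ := hHconn.nonempty
  exact ⟨Fintype.card_prop ▸ (Coloring.mk (G.Reachable a)
      (reachable_ne_of_adj_left hfac hK' hHconn.preconnected hGdisc a)).colorable,
    Fintype.card_prop ▸ (Coloring.mk (G.Reachable a)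
      (reachable_ne_of_adj_right hfac hK' hHconn.preconnected hGdisc a)).colorable⟩
end

section
/- Let a graph G of odd order n be factored into a connected graph H and a graph K with no isolated vertex. Then G is connected. -/
open SimpleGraph Matrix Finset

theorem stmt15 {n : ℕ} (hn : Odd n) (G H K : SimpleGraph (Fin n))
    [DecidableRel G.Adj] [DecidableRel H.Adj] [DecidableRel K.Adj]
    (hfac : G.adjMatrix ℝ = H.adjMatrix ℝ * K.adjMatrix ℝ)
    (hHconn : H.Connected) (hK : ∀ v, 0 < K.degree v) :
    G.Connected := by
  classical
  obtain ⟨m, hm⟩ := hn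
  have a0 : Fin n := ⟨0, by omega⟩
  -- the counting function
  have hcard : ∀ u v, ((univ.filter (fun w => H.Adj u w ∧ K.Adj w v)).card)
      = if G.Adj u v then 1 else 0 := by
    intro u v
    have hr : ((univ.filter (fun w => H.Adj u w ∧ K.Adj w v)).card : ℝ)
        = if G.Adj u v then (1:ℝ) else 0 := by
      rw [← SimpleGraph.adjMatrix_apply (α := ℝ), hfac, Matrix.mul_apply, Finset.card_filter]
      push_cast
      refine Finset.sum_congr rfl fun w _ => ?_
      by_cases h1 : H.Adj u w <;> by_cases h2 : K.Adj w v <;>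
        simp [h1, h2]
    by_cases hg : G.Adj u v <;> simp [hg] at hr ⊢ <;> exact_mod_cast hr
  -- adjacency characterization
  have L1 : ∀ u v, G.Adj u v ↔ ∃ w, H.Adj u w ∧ K.Adj w v := by
    intro u v
    constructor
    · intro hg
      have h := hcard u v
      rw [if_pos hg] at h
      obtain ⟨w, hw⟩ := Finset.card_pos.mp (h ▸ Nat.one_pos)
      exact ⟨w, (Finset.mem_filter.mp hw).2⟩
    · rintro ⟨w, hw⟩
      by_contra hg
      have h := hcard u v
      rw [if_neg hg] at h
      have : w ∈ univ.filter (fun w => H.Adj u w ∧ K.Adj w v) :=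
        Finset.mem_filter.mpr ⟨Finset.mem_univ _, hw⟩
      rw [Finset.card_eq_zero] at h
      simp [h] at this
  -- uniqueness of the witness
  have L1' : ∀ u v w₁ w₂, H.Adj u w₁ → K.Adj w₁ v → H.Adj u w₂ → K.Adj w₂ v → w₁ = w₂ := by
    intro u v w₁ w₂ h1 h2 h3 h4
    by_contra hne
    have h2' : 1 < (univ.filter (fun w => H.Adj u w ∧ K.Adj w v)).card :=
      Finset.one_lt_card.mpr ⟨w₁, Finset.mem_filter.mpr ⟨Finset.mem_univ _, h1, h2⟩,
        w₂, Finset.mem_filter.mpr ⟨Finset.mem_univ _, h3, h4⟩, hne⟩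
    have := hcard u v
    split at this <;> omega
  -- every vertex has a K-neighbor
  have L2 : ∀ v, ∃ u, K.Adj v u := by
    intro v
    have := hK v
    rw [← SimpleGraph.card_neighborFinset_eq_degree] at this
    obtain ⟨u, hu⟩ := Finset.card_pos.mp this
    exact ⟨u, (SimpleGraph.mem_neighborFinset _ _ _).mp hu⟩
  choose k hk using L2
  -- Fin n is nontrivial
  have hnt : Nontrivial (Fin n) := ⟨a0, k a0, (hk a0).ne⟩
  -- every vertex has an H-neighbor
  have L3 : ∀ v, ∃ u, H.Adj v u := by
    intro v
    obtain ⟨w, hw⟩ := exists_ne v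
    obtain ⟨p⟩ := hHconn.preconnected v w
    cases p with
    | nil => exact absurd rfl hw
    | cons h q => exact ⟨_, h⟩
  set comp : Fin n → G.ConnectedComponent := fun v => G.connectedComponentMk v with hcomp
  -- key adjacency facts
  have P1 : ∀ a b, H.Adj a b → comp b = comp (k a) := by
    intro a b hab
    exact ConnectedComponent.sound ((L1 b (k a)).mpr ⟨a, hab.symm, hk a⟩).reachable
  have P2 : ∀ a b, K.Adj a b → comp b = comp (k a) := by
    intro a b hab
    obtain ⟨h, hh⟩ := L3 a
    have e1 : G.Adj h b := (L1 h b).mpr ⟨a, hh.symm, hab⟩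
    have e2 : G.Adj h (k a) := (L1 h (k a)).mpr ⟨a, hh.symm, hk a⟩
    exact (ConnectedComponent.sound e1.reachable).symm.trans
      (ConnectedComponent.sound e2.reachable)
  -- walk lemma: (comp, comp ∘ k) swap along H-walks
  have W : ∀ a b (p : H.Walk a b),
      (comp b = comp a ∧ comp (k b) = comp (k a)) ∨
      (comp b = comp (k a) ∧ comp (k b) = comp a) := by
    intro a b p
    induction p with
    | nil => exact Or.inl ⟨rfl, rfl⟩
    | @cons a c b h q ih =>
      have e1 : comp c = comp (k a) := P1 a c h
      have e2 : comp a = comp (k c) := P1 c a h.symm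
      rcases ih with ⟨f1, f2⟩ | ⟨f1, f2⟩
      · exact Or.inr ⟨f1.trans e1, f2.trans e2.symm⟩
      · exact Or.inl ⟨f1.trans e2.symm, f2.trans e1⟩
  by_cases hA : ∃ a, comp a = comp (k a)
  · -- all components equal: G connected
    obtain ⟨a, ha⟩ := hA
    have hall : ∀ x, comp x = comp a := by
      intro x
      obtain ⟨p⟩ := hHconn.preconnected a x
      rcases W a x p with ⟨f1, _⟩ | ⟨f1, _⟩
      · exact f1
      · exact f1.trans ha.symm
    rw [connected_iff]
    refine ⟨?_, ⟨a0⟩⟩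
    intro u v
    exact ConnectedComponent.exact ((hall u).trans (hall v).symm)
  · -- bipartite-like case: derive contradiction with n odd
    exfalso
    push_neg at hA
    set c1 := comp a0 with hc1
    set c2 := comp (k a0) with hc2
    have hne : c1 ≠ c2 := hA a0
    -- dichotomy
    have hdi : ∀ x, (comp x = c1 ∧ comp (k x) = c2) ∨ (comp x = c2 ∧ comp (k x) = c1) := by
      intro x
      obtain ⟨p⟩ := hHconn.preconnected a0 x
      rcases W a0 x p with ⟨f1, f2⟩ | ⟨f1, f2⟩
      · exact Or.inl ⟨f1, f2⟩
      · exact Or.inr ⟨f1, f2⟩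
    -- K-degree is constant along H-edges
    have degLe : ∀ a b, H.Adj a b → K.degree a ≤ K.degree b := by
      intro a b hab
      rw [← SimpleGraph.card_neighborFinset_eq_degree, ← SimpleGraph.card_neighborFinset_eq_degree]
      have hGb : ∀ y, K.Adj a y → ∃ w, H.Adj y w ∧ K.Adj w b := by
        intro y hy
        exact (L1 y b).mp ((L1 b y).mpr ⟨a, hab.symm, hy⟩).symm
      set F : Fin n → Fin n := fun y =>
        if h : ∃ w, H.Adj y w ∧ K.Adj w b then h.choose else y with hF
      refine Finset.card_le_card_of_injOn F ?_ ?_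
      · intro y hy
        have hy' : K.Adj a y := (SimpleGraph.mem_neighborFinset _ _ _).mp hy
        have hex := hGb y hy'
        rw [Finset.mem_coe, SimpleGraph.mem_neighborFinset]
        have : F y = hex.choose := by simp [hF, dif_pos hex]
        rw [this]
        exact hex.choose_spec.2.symm
      · intro y hy y' hy' heq
        simp only [Finset.coe_filter, Set.mem_setOf_eq, Finset.mem_coe] at hy hy'
        have hya : K.Adj a y := (SimpleGraph.mem_neighborFinset _ _ _).mp hy
        have hya' : K.Adj a y' := (SimpleGraph.mem_neighborFinset _ _ _).mp hy'
        have hex := hGb y hya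
        have hex' := hGb y' hya'
        have e1 : F y = hex.choose := by simp [hF, dif_pos hex]
        have e2 : F y' = hex'.choose := by simp [hF, dif_pos hex']
        have hw : hex.choose = hex'.choose := by rw [← e1, ← e2, heq]
        obtain ⟨h1, h2⟩ := hex.choose_spec
        obtain ⟨h3, h4⟩ := hex'.choose_spec
        rw [hw] at h1
        exact L1' hex'.choose a y y' h1.symm hya.symm h3.symm hya'.symm
    have degEq : ∀ a b, H.Adj a b → K.degree a = K.degree b := fun a b hab =>
      Nat.le_antisymm (degLe a b hab) (degLe b a hab.symm)
    have degConstW : ∀ a b (p : H.Walk a b), K.degree a = K.degree b := by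
      intro a b p
      induction p with
      | nil => rfl
      | @cons a c b h q ih => exact (degEq a c h).trans ih
    have degConst : ∀ v, K.degree v = K.degree a0 :=
      fun v => degConstW v a0 (hHconn.preconnected v a0).some
    set d := K.degree a0 with hd
    have hdpos : 0 < d := hK a0
    -- K-edges cross the two classes
    have hcross1 : ∀ x y, K.Adj x y → comp x = c1 → comp y = c2 := by
      intro x y hxy hx
      have := P2 x y hxy
      rcases hdi x with ⟨_, f2⟩ | ⟨f1, _⟩
      · exact this.trans f2
      · exact absurd (hx ▸ f1 : c1 = c2).symm hne.symm
    have hcross2 : ∀ x y, K.Adj x y → comp x = c2 → comp y = c1 := by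
      intro x y hxy hx
      have := P2 x y hxy
      rcases hdi x with ⟨f1, _⟩ | ⟨_, f2⟩
      · exact absurd (hx ▸ f1 : c2 = c1) hne.symm
      · exact this.trans f2
    -- counting: pairs (x, y) with comp x = c1 and K.Adj x y
    have hcount : ∀ c : G.ConnectedComponent,
        (univ.filter (fun p : Fin n × Fin n => comp p.1 = c ∧ K.Adj p.1 p.2)).card
          = d * (univ.filter (fun x => comp x = c)).card := by
      intro c
      rw [Finset.card_filter, Fintype.sum_prod_type]
      have : ∀ x : Fin n, (∑ y : Fin n, if comp x = c ∧ K.Adj x y then 1 else 0)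
          = if comp x = c then d else 0 := by
        intro x
        by_cases hx : comp x = c
        · simp only [hx, true_and, if_pos]
          rw [← degConst x, ← SimpleGraph.card_neighborFinset_eq_degree,
            SimpleGraph.neighborFinset_eq_filter, Finset.card_filter]
        · simp [hx]
      rw [Finset.sum_congr rfl fun x _ => this x]
      rw [← Finset.sum_filter, Finset.sum_const, smul_eq_mul, mul_comm]
    -- bijection by swapping
    have hbij : (univ.filter (fun p : Fin n × Fin n => comp p.1 = c1 ∧ K.Adj p.1 p.2)).card
        = (univ.filter (fun p : Fin n × Fin n => comp p.1 = c2 ∧ K.Adj p.1 p.2)).card := by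
      refine Finset.card_bij (fun p _ => p.swap) ?_ ?_ ?_
      · intro p hp
        simp only [Finset.mem_filter, Finset.mem_univ, true_and] at hp ⊢
        exact ⟨hcross1 p.1 p.2 hp.2 hp.1, hp.2.symm⟩
      · intro p _ q _ h
        exact Prod.swap_injective h
      · intro p hp
        simp only [Finset.mem_filter, Finset.mem_univ, true_and] at hp
        exact ⟨p.swap, Finset.mem_filter.mpr ⟨Finset.mem_univ _,
          hcross2 p.1 p.2 hp.2 hp.1, hp.2.symm⟩, Prod.swap_swap p⟩
    have hVeq : (univ.filter (fun x => comp x = c1)).card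
        = (univ.filter (fun x => comp x = c2)).card := by
      have h1 := hcount c1
      have h2 := hcount c2
      rw [hbij] at h1
      rw [h1] at h2
      exact Nat.eq_of_mul_eq_mul_left hdpos h2
    have hpart : (univ.filter (fun x => comp x = c1)).card
        + (univ.filter (fun x => comp x = c2)).card = n := by
      have hv2 : (univ.filter (fun x => ¬ comp x = c1)) = (univ.filter (fun x => comp x = c2)) := by
        ext x
        simp only [Finset.mem_filter, Finset.mem_univ, true_and]
        constructor
        · intro hx
          rcases hdi x with ⟨f1, _⟩ | ⟨f1, _⟩
          · exact absurd f1 hx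
          · exact f1
        · intro hx h1
          exact hne (h1.symm.trans hx)
      rw [← hv2, Finset.card_filter_add_card_filter_not]
      simp
    omega
end

section
/- If a graph G is factorizable (A = BC for adjacency matrices of G and two graphs H, K), then G has an even number of edges. -/
/-!
Entrywise, `A = BC` says that `i ~_G j` holds exactly when there is a path `i ~_H k ~_K j`,
and that this middle vertex `k` is then unique. For an edge `ij` let `k` be the middle vertex
of `i → j` and `l` that of `j → i`. By symmetry of `H` and `K`, `k ~_H i ~_K l` and
`l ~_H j ~_K k`, so `kl` is an edge whose middle vertices are `i` and `j`. Hence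
`{i, j} ↦ {k, l}` is an involution on the edges of `G`; it has no fixed point because
`H` and `K` are loopless, so the edges of `G` come in pairs.
-/

open SimpleGraph Matrix Finset

theorem Finset.even_card_of_involution {α : Type*} {s : Finset α} (f : α → α)
    (hf_mem : ∀ a ∈ s, f a ∈ s) (hf_invol : ∀ a ∈ s, f (f a) = a)
    (hf_ne : ∀ a ∈ s, f a ≠ a) : Even #s := by
  have hsum : ∑ _ ∈ s, (1 : ZMod 2) = 0 :=
    sum_involution (fun a _ => f a) (fun _ _ => by decide) (fun a ha _ => hf_ne a ha)
      hf_mem hf_invol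
  rw [sum_const, nsmul_one] at hsum
  exact ZMod.natCast_eq_zero_iff_even.1 hsum

namespace SimpleGraph

variable {V : Type*}

noncomputable def midVertex (H K : SimpleGraph V) (i j : V) : V :=
  @Classical.epsilon V ⟨i⟩ fun k => H.Adj i k ∧ K.Adj k j

noncomputable def midEdge (H K : SimpleGraph V) : Sym2 V → Sym2 V :=
  Sym2.lift ⟨fun i j => s(midVertex H K i j, midVertex H K j i), fun _ _ => Sym2.eq_swap⟩

@[simp]
theorem midEdge_mk (H K : SimpleGraph V) (i j : V) :
    midEdge H K s(i, j) = s(midVertex H K i j, midVertex H K j i) :=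
  rfl

variable [Fintype V] (G H K : SimpleGraph V)
  [DecidableRel G.Adj] [DecidableRel H.Adj] [DecidableRel K.Adj]

theorem adjMatrix_mul_adjMatrix_apply_s18 {R : Type*} [NonAssocSemiring R] (i j : V) :
    (H.adjMatrix R * K.adjMatrix R) i j = #{k | H.Adj i k ∧ K.Adj k j} := by
  simp only [mul_apply, adjMatrix_apply, ite_zero_mul_ite_zero, mul_one, sum_boole]

/-- The combinatorial content of `A_G = A_H A_K`. -/
def IsFactoredInto : Prop :=
  ∀ i j, #{k | H.Adj i k ∧ K.Adj k j} = if G.Adj i j then 1 else 0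

variable {G H K}

theorem isFactoredInto_of_adjMatrix_eq_mul {R : Type*} [NonAssocSemiring R] [CharZero R]
    (h : G.adjMatrix R = H.adjMatrix R * K.adjMatrix R) : G.IsFactoredInto H K := by
  intro i j
  have hij := congr_fun₂ h i j
  rw [adjMatrix_mul_adjMatrix_apply_s18, adjMatrix_apply] at hij
  exact_mod_cast hij.symm

namespace IsFactoredInto

variable {i j k : V}

theorem adj_of_adj_of_adj (h : G.IsFactoredInto H K) (hik : H.Adj i k) (hkj : K.Adj k j) :
    G.Adj i j := by
  by_contra hij
  have hcard := h i j
  rw [if_neg hij, card_eq_zero, filter_eq_empty_iff] at hcard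
  exact hcard (mem_univ k) ⟨hik, hkj⟩

theorem existsUnique_of_adj (h : G.IsFactoredInto H K) (hij : G.Adj i j) :
    ∃! k, H.Adj i k ∧ K.Adj k j := by
  have hcard := h i j
  rw [if_pos hij, card_eq_one] at hcard
  obtain ⟨k, hk⟩ := hcard
  have hmid : ∀ x, H.Adj i x ∧ K.Adj x j ↔ x = k := by simpa [Finset.ext_iff] using hk
  exact ⟨k, (hmid k).2 rfl, fun x hx => (hmid x).1 hx⟩

theorem midVertex_spec (h : G.IsFactoredInto H K) (hij : G.Adj i j) :
    H.Adj i (midVertex H K i j) ∧ K.Adj (midVertex H K i j) j :=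
  Classical.epsilon_spec (h.existsUnique_of_adj hij).exists

theorem eq_midVertex (h : G.IsFactoredInto H K) (hij : G.Adj i j) (hik : H.Adj i k)
    (hkj : K.Adj k j) : k = midVertex H K i j :=
  (h.existsUnique_of_adj hij).unique ⟨hik, hkj⟩ (h.midVertex_spec hij)

theorem adj_midVertex (h : G.IsFactoredInto H K) (hij : G.Adj i j) :
    G.Adj (midVertex H K i j) (midVertex H K j i) :=
  h.adj_of_adj_of_adj (h.midVertex_spec hij).1.symm (h.midVertex_spec hij.symm).2.symm

theorem midVertex_midVertex (h : G.IsFactoredInto H K) (hij : G.Adj i j) :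
    midVertex H K (midVertex H K i j) (midVertex H K j i) = i :=
  (h.eq_midVertex (h.adj_midVertex hij) (h.midVertex_spec hij).1.symm
    (h.midVertex_spec hij.symm).2.symm).symm

theorem midEdge_ne (h : G.IsFactoredInto H K) (hij : G.Adj i j) :
    midEdge H K s(i, j) ≠ s(i, j) := by
  rw [midEdge_mk, Ne, Sym2.eq_iff]
  rintro (⟨hi, -⟩ | ⟨-, hi⟩)
  · exact H.irrefl (hi ▸ (h.midVertex_spec hij).1)
  · exact K.irrefl (hi ▸ (h.midVertex_spec hij.symm).2)

theorem even_card_edgeFinset (h : G.IsFactoredInto H K) :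
    Even #G.edgeFinset := by
  refine even_card_of_involution (midEdge H K) ?_ ?_ ?_ <;>
    refine fun e he => Sym2.ind (fun i j he => ?_) e he <;>
    rw [mem_edgeFinset, mem_edgeSet] at he
  · simpa using h.adj_midVertex he
  · rw [midEdge_mk, midEdge_mk, h.midVertex_midVertex he, h.midVertex_midVertex he.symm]
  · exact h.midEdge_ne he

end IsFactoredInto

end SimpleGraph

theorem stmt18 {n : ℕ} (G H K : SimpleGraph (Fin n))
    [DecidableRel G.Adj] [DecidableRel H.Adj] [DecidableRel K.Adj]
    (hfac : G.adjMatrix ℝ = H.adjMatrix ℝ * K.adjMatrix ℝ) :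
    Even G.edgeFinset.card :=
  (isFactoredInto_of_adjMatrix_eq_mul hfac).even_card_edgeFinset
end

section
/- No tree on at least 2 vertices is factorizable: there do not exist a tree T of order n ≥ 2 and graphs H, K with adjacency matrices A, B, C satisfying A = BC. -/
open SimpleGraph Matrix Finset

theorem stmt19 {n : ℕ} (hn : 2 ≤ n) (T H K : SimpleGraph (Fin n))
    [DecidableRel T.Adj] [DecidableRel H.Adj] [DecidableRel K.Adj]
    (hT : T.IsTree) :
    T.adjMatrix ℝ ≠ H.adjMatrix ℝ * K.adjMatrix ℝ := by
  intro hA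
  classical
  -- the number of common "middles"
  set N : Fin n → Fin n → ℕ :=
    fun i j => (univ.filter fun k => H.Adj i k ∧ K.Adj k j).card with hNdef
  have hNcount : ∀ i j, N i j
      = ∑ k : Fin n, (if H.Adj i k then 1 else 0) * (if K.Adj k j then 1 else 0) := by
    intro i j
    simp only [hNdef]
    rw [Finset.card_filter]
    apply Finset.sum_congr rfl
    intro k _
    by_cases h1 : H.Adj i k <;> by_cases h2 : K.Adj k j <;> simp [h1, h2]
  have key : ∀ i j, (N i j : ℝ) = if T.Adj i j then 1 else 0 := by
    intro i j
    have := congrFun (congrFun hA i) j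
    rw [Matrix.mul_apply] at this
    simp only [SimpleGraph.adjMatrix_apply] at this
    rw [this, hNcount]
    push_cast
    apply Finset.sum_congr rfl
    intro k _
    by_cases h1 : H.Adj i k <;> by_cases h2 : K.Adj k j <;> simp [h1, h2]
  have hN1 : ∀ i j, T.Adj i j → N i j = 1 := by
    intro i j h
    have := key i j
    rw [if_pos h] at this
    exact_mod_cast this
  have hN0 : ∀ i j, ¬ T.Adj i j → N i j = 0 := by
    intro i j h
    have := key i j
    rw [if_neg h] at this
    exact_mod_cast this
  have hAdj_of : ∀ i j k, H.Adj i k → K.Adj k j → T.Adj i j := by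
    intro i j k h1 h2
    by_contra hne
    have h0 := hN0 i j hne
    have hmem : k ∈ univ.filter fun k => H.Adj i k ∧ K.Adj k j := by
      simp [h1, h2]
    have h1' : 0 < N i j := Finset.card_pos.mpr ⟨k, hmem⟩
    omega
  have hdisj : ∀ i k, H.Adj i k → K.Adj k i → False := by
    intro i k h1 h2
    exact T.loopless.irrefl i (hAdj_of i i k h1 h2)
  -- the unique middle
  have hmex : ∀ i j, ∃ k, T.Adj i j →
      (H.Adj i k ∧ K.Adj k j) ∧ ∀ l, H.Adj i l → K.Adj l j → l = k := by
    intro i j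
    by_cases h : T.Adj i j
    · obtain ⟨a, ha⟩ := Finset.card_eq_one.mp (hN1 i j h)
      refine ⟨a, fun _ => ?_⟩
      have hmem : a ∈ univ.filter fun k => H.Adj i k ∧ K.Adj k j := by
        rw [ha]; exact Finset.mem_singleton_self a
      simp only [Finset.mem_filter] at hmem
      refine ⟨hmem.2, fun l h1 h2 => ?_⟩
      have : l ∈ univ.filter fun k => H.Adj i k ∧ K.Adj k j := by simp [h1, h2]
      rw [ha, Finset.mem_singleton] at this
      exact this
    · exact ⟨i, fun h' => absurd h' h⟩
  choose m hm using hmex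
  have hmH : ∀ i j (h : T.Adj i j), H.Adj i (m i j) := fun i j h => ((hm i j h).1).1
  have hmK : ∀ i j (h : T.Adj i j), K.Adj (m i j) j := fun i j h => ((hm i j h).1).2
  have hmu : ∀ i j (h : T.Adj i j) l, H.Adj i l → K.Adj l j → l = m i j :=
    fun i j h => (hm i j h).2
  -- the involution on edges
  have hmadj : ∀ i j, T.Adj i j → T.Adj (m i j) (m j i) := by
    intro i j h
    exact hAdj_of _ _ i (hmH i j h).symm ((hmK j i h.symm).symm)
  have hmm1 : ∀ i j (h : T.Adj i j), m (m i j) (m j i) = i := by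
    intro i j h
    exact (hmu _ _ (hmadj i j h) i (hmH i j h).symm ((hmK j i h.symm).symm)).symm
  have hmm2 : ∀ i j (h : T.Adj i j), m (m j i) (m i j) = j := by
    intro i j h
    exact (hmu _ _ (hmadj i j h).symm j ((hmH j i h.symm)).symm ((hmK i j h).symm)).symm
  -- Even number of edges via a fixed-point-free involution
  have hq : ∀ (i j : Fin n),
      (fun i j => s(m i j, m j i)) i j = (fun i j => s(m i j, m j i)) j i := by
    intro i j
    exact Sym2.eq_swap
  set q : Sym2 (Fin n) → Sym2 (Fin n) := Sym2.lift ⟨fun i j => s(m i j, m j i), hq⟩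
    with hqdef
  have hq_apply : ∀ i j, q s(i, j) = s(m i j, m j i) := by
    intro i j; simp [hqdef]
  have hEeven : Even T.edgeFinset.card := by
    have hsum : ∑ _e ∈ T.edgeFinset, (1 : ZMod 2) = 0 := by
      apply Finset.sum_involution (fun e he => q e)
      · intro a ha; decide
      · intro a ha _
        induction a with
        | _ i j =>
          rw [SimpleGraph.mem_edgeFinset, SimpleGraph.mem_edgeSet] at ha
          rw [hq_apply]
          intro heq
          rcases Sym2.eq_iff.mp heq with ⟨h1, _⟩ | ⟨h1, h2⟩
          · exact (hmH i j ha).ne' h1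
          · exact (hmK i j ha).ne h1
      · intro a ha
        induction a with
        | _ i j =>
          rw [SimpleGraph.mem_edgeFinset, SimpleGraph.mem_edgeSet] at ha
          rw [SimpleGraph.mem_edgeFinset, hq_apply, SimpleGraph.mem_edgeSet]
          exact hmadj i j ha
      · intro a ha
        induction a with
        | _ i j =>
          rw [SimpleGraph.mem_edgeFinset, SimpleGraph.mem_edgeSet] at ha
          rw [hq_apply, hq_apply, hmm1 i j ha, hmm2 i j ha]
    rw [Finset.sum_const, nsmul_eq_mul, mul_one] at hsum
    have := (ZMod.natCast_eq_zero_iff _ 2).mp hsum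
    exact even_iff_two_dvd.mpr this
  -- number of edges of a tree
  have hcard : T.edgeFinset.card + 1 = n := by
    have := hT.card_edgeFinset
    simpa using this
  -- Now show n is even
  have hb : ∀ k : Fin n, 0 < H.degree k := by
    intro k
    obtain ⟨j, hj⟩ := Fintype.exists_ne_of_one_lt_card (by rw [Fintype.card_fin]; omega) k
    obtain ⟨w⟩ := hT.isConnected.preconnected k j
    have hadj : ∃ x, T.Adj k x := by
      cases w with
      | nil => exact absurd rfl hj.symm
      | cons h _ => exact ⟨_, h⟩
    obtain ⟨x, hx⟩ := hadj
    rw [H.degree_pos_iff_exists_adj]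
    exact ⟨m k x, hmH k x hx⟩
  have hc : ∀ k : Fin n, 0 < K.degree k := by
    intro k
    obtain ⟨j, hj⟩ := Fintype.exists_ne_of_one_lt_card (by rw [Fintype.card_fin]; omega) k
    obtain ⟨w⟩ := hT.isConnected.preconnected k j
    have hadj : ∃ x, T.Adj k x := by
      cases w with
      | nil => exact absurd rfl hj.symm
      | cons h _ => exact ⟨_, h⟩
    obtain ⟨x, hx⟩ := hadj
    rw [K.degree_pos_iff_exists_adj]
    exact ⟨m x k, (hmK x k hx.symm).symm⟩
  have hbc1 : ∀ k : Fin n, H.degree k = 1 ∨ K.degree k = 1 := by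
    intro k
    by_contra hcon
    push_neg at hcon
    obtain ⟨h1, h2⟩ := hcon
    have hH2 : 1 < (H.neighborFinset k).card := by
      rw [SimpleGraph.card_neighborFinset_eq_degree]
      have := hb k; omega
    have hK2 : 1 < (K.neighborFinset k).card := by
      rw [SimpleGraph.card_neighborFinset_eq_degree]
      have := hc k; omega
    obtain ⟨i, hi, i', hi', hii⟩ := Finset.one_lt_card.mp hH2
    obtain ⟨j, hj, j', hj', hjj⟩ := Finset.one_lt_card.mp hK2
    rw [SimpleGraph.mem_neighborFinset] at hi hi' hj hj'
    -- all four adjacencies in T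
    have e1 : T.Adj i j := hAdj_of i j k hi.symm hj
    have e2 : T.Adj i j' := hAdj_of i j' k hi.symm hj'
    have e3 : T.Adj i' j := hAdj_of i' j k hi'.symm hj
    have e4 : T.Adj i' j' := hAdj_of i' j' k hi'.symm hj'
    have hii' : i ≠ i' := hii
    -- two distinct paths i - j - i' and i - j' - i'
    have hp1 : (SimpleGraph.Walk.cons e1
        (SimpleGraph.Walk.cons e3.symm SimpleGraph.Walk.nil)).IsPath := by
      refine SimpleGraph.Walk.IsPath.cons
        (SimpleGraph.Walk.IsPath.cons SimpleGraph.Walk.IsPath.nil ?_) ?_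
      · simp [e3.ne']
      · simp [e1.ne, hii']
    have hp2 : (SimpleGraph.Walk.cons e2
        (SimpleGraph.Walk.cons e4.symm SimpleGraph.Walk.nil)).IsPath := by
      refine SimpleGraph.Walk.IsPath.cons
        (SimpleGraph.Walk.IsPath.cons SimpleGraph.Walk.IsPath.nil ?_) ?_
      · simp [e4.ne']
      · simp [e2.ne, hii']
    have hpath := (SimpleGraph.isAcyclic_iff_path_unique.mp hT.IsAcyclic)
      ⟨_, hp1⟩ ⟨_, hp2⟩
    have hwalk := Subtype.ext_iff.mp hpath
    have hsup := congrArg SimpleGraph.Walk.support hwalk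
    simp only [SimpleGraph.Walk.support_cons, SimpleGraph.Walk.support_nil] at hsup
    simp only [List.cons.injEq] at hsup
    exact hjj hsup.2.1
  -- sum identity: ∑ deg_H k * deg_K k = 2 * |E(T)|
  have hsumN : ∑ k : Fin n, H.degree k * K.degree k = 2 * T.edgeFinset.card := by
    have step1 : ∀ k : Fin n, H.degree k * K.degree k
        = ∑ i : Fin n, ∑ j : Fin n,
            (if H.Adj k i then 1 else 0) * (if K.Adj k j then 1 else 0) := by
      intro k
      rw [← Finset.sum_mul_sum]
      congr 1
      · rw [← SimpleGraph.card_neighborFinset_eq_degree,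
          SimpleGraph.neighborFinset_eq_filter, Finset.card_filter]
      · rw [← SimpleGraph.card_neighborFinset_eq_degree,
          SimpleGraph.neighborFinset_eq_filter, Finset.card_filter]
    calc ∑ k : Fin n, H.degree k * K.degree k
        = ∑ k : Fin n, ∑ i : Fin n, ∑ j : Fin n,
            (if H.Adj k i then 1 else 0) * (if K.Adj k j then 1 else 0) :=
          Finset.sum_congr rfl fun k _ => step1 k
      _ = ∑ i : Fin n, ∑ j : Fin n, N i j := by
          rw [Finset.sum_comm]
          apply Finset.sum_congr rfl; intro i _
          rw [Finset.sum_comm]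
          apply Finset.sum_congr rfl; intro j _
          rw [hNcount]
          apply Finset.sum_congr rfl; intro k _
          congr 1
          by_cases h1 : H.Adj i k
          · simp [h1, h1.symm]
          · have h2 : ¬ H.Adj k i := fun hh => h1 hh.symm
            simp [h1, h2]
      _ = ∑ i : Fin n, T.degree i := by
          apply Finset.sum_congr rfl; intro i _
          rw [← SimpleGraph.card_neighborFinset_eq_degree,
            SimpleGraph.neighborFinset_eq_filter, Finset.card_filter]
          apply Finset.sum_congr rfl; intro j _
          by_cases h : T.Adj i j
          · simp [hN1 i j h, h]
          · simp [hN0 i j h, h]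
      _ = 2 * T.edgeFinset.card := by
          rw [SimpleGraph.sum_degrees_eq_twice_card_edges]
  have hneven : Even n := by
    have hterm : ∀ k : Fin n, (H.degree k : ℤ) + K.degree k - H.degree k * K.degree k = 1 := by
      intro k
      rcases hbc1 k with h | h <;> rw [h] <;> push_cast <;> ring
    have hsum1 : (n : ℤ) = ∑ k : Fin n,
        ((H.degree k : ℤ) + K.degree k - H.degree k * K.degree k) := by
      rw [Finset.sum_congr rfl fun k _ => hterm k]
      simp
    rw [Finset.sum_sub_distrib, Finset.sum_add_distrib] at hsum1
    have h1 : ∑ k : Fin n, (H.degree k : ℤ) = 2 * H.edgeFinset.card := by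
      rw [← Nat.cast_sum, SimpleGraph.sum_degrees_eq_twice_card_edges]
      push_cast; ring
    have h2 : ∑ k : Fin n, (K.degree k : ℤ) = 2 * K.edgeFinset.card := by
      rw [← Nat.cast_sum, SimpleGraph.sum_degrees_eq_twice_card_edges]
      push_cast; ring
    have h3 : ∑ k : Fin n, ((H.degree k : ℤ) * K.degree k) = 2 * T.edgeFinset.card := by
      have : ∑ k : Fin n, ((H.degree k : ℤ) * K.degree k)
          = ((∑ k : Fin n, H.degree k * K.degree k : ℕ) : ℤ) := by push_cast; rfl
      rw [this, hsumN]; push_cast; ring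
    rw [h1, h2, h3] at hsum1
    have hev : Even (n : ℤ) :=
      ⟨(H.edgeFinset.card : ℤ) + K.edgeFinset.card - T.edgeFinset.card, by omega⟩
    exact_mod_cast hev
  -- contradiction
  obtain ⟨a, ha⟩ := hneven
  obtain ⟨b, hb'⟩ := hEeven
  omega
end
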